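/- Let M be the number of homogeneous hosts and N the number of homogeneous VMs (M, N positive integers), with the cost of energy consumption per unit of time C_e = 1 and the cost of overloads per unit of time C_o = ε ≥ 0. Let the maximum number of simultaneously overloaded hosts be M_o = ⌊MN/(N+M)⌋ and let M_o' ≤ M_o be the number of overloaded hosts during the migration phase. For a workload input I over a scheduling interval consisting of τ > 0 repetitions of a brownout phase of duration t_b > 0 and a migration phase of duration t_m > 0, the cost of the EEBA algorithm is EEBA(I) = τ[t_b(M·C_e + M_o·C_o) + t_m(M·C_e + M_o'·C_o)] and the cost of the optimal offline algorithm is OPT(I) = τ(t_b + t_m)·M·C_e. Then the competitive ratio satisfies EEBA(I)/OPT(I) ≤ 1 + Nε/(N+M). -/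
import Mathlib


/-- Competitive ratio of the EEBA algorithm: with `M` homogeneous hosts, `N` homogeneous VMs,
energy cost `C_e = 1`, overload cost `C_o = ε ≥ 0`, maximum number of overloaded hosts
`M_o = ⌊M*N/(N+M)⌋`, and `M_o' ≤ M_o` the number of overloaded hosts during migration,
the cost `EEBA = τ*(t_b*(M*C_e + M_o*C_o) + t_m*(M*C_e + M_o'*C_o))` of the algorithm and
the optimal offline cost `OPT = τ*(t_b + t_m)*M*C_e` satisfy
`EEBA/OPT ≤ 1 + N*ε/(N+M)`. -/
theorem eeba_competitive_ratio
    (M N : ℕ) (hM : 0 < M) (hN : 0 < N)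
    (ε : ℝ) (hε : 0 ≤ ε)
    (Ce Co : ℝ) (hCe : Ce = 1) (hCo : Co = ε)
    (Mo : ℝ) (hMo : Mo = ⌊(M : ℝ) * N / ((N : ℝ) + M)⌋)
    (Mo' : ℝ) (hMo'0 : 0 ≤ Mo') (hMo' : Mo' ≤ Mo)
    (τ tb tm : ℝ) (hτ : 0 < τ) (htb : 0 < tb) (htm : 0 < tm)
    (EEBA OPT : ℝ)
    (hEEBA : EEBA = τ * (tb * ((M : ℝ) * Ce + Mo * Co) + tm * ((M : ℝ) * Ce + Mo' * Co)))
    (hOPT : OPT = τ * (tb + tm) * (M : ℝ) * Ce) :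
    EEBA / OPT ≤ 1 + (N : ℝ) * ε / ((N : ℝ) + M) := by
  have hMpos : (0:ℝ) < M := by exact_mod_cast hM
  have hNpos : (0:ℝ) < N := by exact_mod_cast hN
  have hS : (0:ℝ) < (N:ℝ) + M := by linarith
  have hfloor : Mo ≤ (M : ℝ) * N / ((N : ℝ) + M) := by
    rw [hMo]; exact Int.floor_le _
  have hOPTpos : 0 < OPT := by
    rw [hOPT, hCe]; positivity
  rw [div_le_iff₀ hOPTpos, hEEBA, hOPT, hCe, hCo]
  have key : Mo * ε ≤ (M : ℝ) * ((N : ℝ) * ε / ((N : ℝ) + M)) := by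
    have : Mo * ε ≤ ((M : ℝ) * N / ((N : ℝ) + M)) * ε :=
      mul_le_mul_of_nonneg_right hfloor hε
    calc Mo * ε ≤ ((M : ℝ) * N / ((N : ℝ) + M)) * ε := this
      _ = (M : ℝ) * ((N : ℝ) * ε / ((N : ℝ) + M)) := by ring
  have key' : Mo' * ε ≤ (M : ℝ) * ((N : ℝ) * ε / ((N : ℝ) + M)) :=
    le_trans (mul_le_mul_of_nonneg_right hMo' hε) key
  nlinarith [mul_le_mul_of_nonneg_left key (le_of_lt htb),
    mul_le_mul_of_nonneg_left key' (le_of_lt htm), mul_pos htb htm, hτ.le]
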